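/- There is a universal constant C > 0 such that for every integer d ≥ 1 and real t > 0 there exist matrices (L^r)_{r=1}^{d²} in M_d with ∑_r L^r (L^r)* ≤ Id, ∑_r (L^r)* L^r ≤ t² Id, and |∑_r ⟨Φ_d, (L^r ⊗ L^r) Φ_d⟩ − t| ≤ C t ln(1 + max(t, t⁻¹)) / (1 + ln d), where Φ_d = Z_d^{-1/2} ∑_{i=1}^d i^{-1/2} e_i ⊗ e_i. -/

import Mathlib

open Matrix Kronecker ComplexOrder

noncomputable def Zd (d : ℕ) : ℝ := ∑ i ∈ Finset.range d, ((i : ℝ) + 1)⁻¹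

noncomputable def zvec (d : ℕ) (i : Fin d) : ℝ :=
  (Real.sqrt (Zd d))⁻¹ * (Real.sqrt ((i : ℝ) + 1))⁻¹

noncomputable def Phi (d : ℕ) (p : Fin d × Fin d) : ℂ :=
  if p.1 = p.2 then (zvec d p.1 : ℂ) else 0

/-!
Take `L^{(i,j)} = √w_{ij} E_{ij}`, where `w_{ij}` is the length of `[i, i+1] ∩ [t²j, t²(j+1)]`.
Then `∑ L Lᴴ` and `∑ Lᴴ L` are diagonal with the row and column sums of `w`, which are at most `1`
and `t²` because the intervals `[t²j, t²(j+1)]` tile `[0, t²d]` and the `[i, i+1]` tile `[0, d]`.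
The value is `Z_d⁻¹ ∑ w_{ij} / √((i+1)(j+1))`, and AM–GM with weights `t, t⁻¹` bounds it by `t`.
Conversely `w_{ij} ≠ 0` forces `t²j < i+1`, so `1/√((i+1)(j+1)) ≥ t/(i+1+t²)`; the first
`⌊min(1,t²) d⌋` rows are full, which gives `∑ ≥ t (log d - log(1 + max(t,t⁻¹)²))`, while
`Z_d ≤ 1 + log d`.
-/

open Finset Real

noncomputable def intervalOverlap (a b c e : ℝ) : ℝ := max 0 (min b e - max a c)

lemma intervalOverlap_nonneg (a b c e : ℝ) : 0 ≤ intervalOverlap a b c e := le_max_left _ _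

lemma intervalOverlap_comm (a b c e : ℝ) : intervalOverlap a b c e = intervalOverlap c e a b := by
  simp only [intervalOverlap, min_comm b, max_comm a]

lemma lt_of_intervalOverlap_pos {a b c e : ℝ} (h : 0 < intervalOverlap a b c e) : c < b := by
  by_contra! hbc
  have : min b e - max a c ≤ 0 := by linarith [min_le_left b e, le_max_right a c]
  simp [intervalOverlap, max_eq_left this] at h

lemma intervalOverlap_eq_sub {a b c e : ℝ} (hab : a ≤ b) (hce : c ≤ e) :
    intervalOverlap a b c e = min b (max a e) - min b (max a c) := by
  simp only [intervalOverlap, min_def, max_def]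
  split_ifs <;> linarith

section Telescoping

variable {a b : ℝ} {x : ℕ → ℝ}

lemma sum_range_intervalOverlap (hab : a ≤ b) (hx : Monotone x) (n : ℕ) :
    ∑ j ∈ range n, intervalOverlap a b (x j) (x (j + 1)) =
      min b (max a (x n)) - min b (max a (x 0)) := by
  rw [← sum_range_sub fun j => min b (max a (x j))]
  exact sum_congr rfl fun j _ => intervalOverlap_eq_sub hab (hx j.le_succ)

lemma sum_range_intervalOverlap_le (hab : a ≤ b) (hx : Monotone x) (n : ℕ) :
    ∑ j ∈ range n, intervalOverlap a b (x j) (x (j + 1)) ≤ b - a := by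
  rw [sum_range_intervalOverlap hab hx]
  linarith [min_le_left b (max a (x n)), le_min hab (le_max_left a (x 0))]

lemma sum_range_intervalOverlap_eq (hab : a ≤ b) (hx : Monotone x) {n : ℕ} (h0 : x 0 ≤ a)
    (hn : b ≤ x n) : ∑ j ∈ range n, intervalOverlap a b (x j) (x (j + 1)) = b - a := by
  rw [sum_range_intervalOverlap hab hx, max_eq_right (hab.trans hn), max_eq_left h0,
    min_eq_left hn, min_eq_right hab]

end Telescoping

-- The right endpoints are casts of `i + 1` and `j + 1`, as in the telescoping lemmas above.
noncomputable def overlapWeight (t : ℝ) (i j : ℕ) : ℝ :=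
  intervalOverlap i (i + 1 : ℕ) (t ^ 2 * j) (t ^ 2 * (j + 1 : ℕ))

lemma overlapWeight_nonneg (t : ℝ) (i j : ℕ) : 0 ≤ overlapWeight t i j :=
  intervalOverlap_nonneg _ _ _ _

lemma monotone_mul_natCast {c : ℝ} (hc : 0 ≤ c) : Monotone fun j : ℕ => c * j :=
  fun _ _ h => mul_le_mul_of_nonneg_left (by exact_mod_cast h) hc

lemma sum_overlapWeight_row_le (t : ℝ) (i d : ℕ) : ∑ j ∈ range d, overlapWeight t i j ≤ 1 :=
  (sum_range_intervalOverlap_le (by simp) (monotone_mul_natCast (sq_nonneg t)) d).trans_eq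
    (by push_cast; ring)

lemma sum_overlapWeight_row_eq_one {t : ℝ} {i d : ℕ} (h : (i + 1 : ℝ) ≤ t ^ 2 * d) :
    ∑ j ∈ range d, overlapWeight t i j = 1 :=
  (sum_range_intervalOverlap_eq (by simp) (monotone_mul_natCast (sq_nonneg t)) (by simp)
    (by exact_mod_cast h)).trans (by push_cast; ring)

lemma sum_overlapWeight_col_le (t : ℝ) (j d : ℕ) :
    ∑ i ∈ range d, overlapWeight t i j ≤ t ^ 2 := by
  simp only [overlapWeight, intervalOverlap_comm _ _ (t ^ 2 * _)]
  refine (sum_range_intervalOverlap_le (monotone_mul_natCast (sq_nonneg t) j.le_succ)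
    Nat.mono_cast d).trans_eq ?_
  push_cast; ring

lemma lt_of_overlapWeight_pos {t : ℝ} {i j : ℕ} (h : 0 < overlapWeight t i j) :
    t ^ 2 * j < i + 1 := by
  simpa using lt_of_intervalOverlap_pos h

lemma sum_sum_mul_mul_le_mul_sum_sq {ι : Type*} (s : Finset ι) (w : ι → ι → ℝ) (x : ι → ℝ)
    {t : ℝ} (ht : 0 < t) (hw : ∀ i j, 0 ≤ w i j) (hrow : ∀ i ∈ s, ∑ j ∈ s, w i j ≤ 1)
    (hcol : ∀ j ∈ s, ∑ i ∈ s, w i j ≤ t ^ 2) :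
    ∑ i ∈ s, ∑ j ∈ s, w i j * x i * x j ≤ t * ∑ i ∈ s, x i ^ 2 := by
  have amgm : ∀ i j, w i j * x i * x j ≤ (t * (w i j * x i ^ 2) + t⁻¹ * (w i j * x j ^ 2)) / 2 := by
    intro i j
    have hsq : t * x i ^ 2 + t⁻¹ * x j ^ 2 - 2 * (x i * x j) = t⁻¹ * (t * x i - x j) ^ 2 := by
      field_simp; ring
    have : 0 ≤ t⁻¹ * (t * x i - x j) ^ 2 := by positivity
    nlinarith [hw i j]
  have hrows : ∑ i ∈ s, ∑ j ∈ s, w i j * x i ^ 2 ≤ ∑ i ∈ s, x i ^ 2 := sum_le_sum fun i hi => by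
    rw [← sum_mul]; exact mul_le_of_le_one_left (sq_nonneg _) (hrow i hi)
  have hcols : ∑ i ∈ s, ∑ j ∈ s, w i j * x j ^ 2 ≤ t ^ 2 * ∑ j ∈ s, x j ^ 2 := by
    rw [sum_comm, mul_sum]
    exact sum_le_sum fun j hj => by
      rw [← sum_mul]; exact mul_le_mul_of_nonneg_right (hcol j hj) (sq_nonneg _)
  calc ∑ i ∈ s, ∑ j ∈ s, w i j * x i * x j
      ≤ ∑ i ∈ s, ∑ j ∈ s, (t * (w i j * x i ^ 2) + t⁻¹ * (w i j * x j ^ 2)) / 2 :=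
        sum_le_sum fun i _ => sum_le_sum fun j _ => amgm i j
    _ = (t * ∑ i ∈ s, ∑ j ∈ s, w i j * x i ^ 2 + t⁻¹ * ∑ i ∈ s, ∑ j ∈ s, w i j * x j ^ 2) / 2 := by
        simp only [← sum_div, ← sum_add_distrib, mul_sum]
    _ ≤ (t * ∑ i ∈ s, x i ^ 2 + t⁻¹ * (t ^ 2 * ∑ i ∈ s, x i ^ 2)) / 2 := by gcongr
    _ = t * ∑ i ∈ s, x i ^ 2 := by field_simp; ring

lemma log_add_sub_log_le_sum_inv {a : ℝ} (ha : 0 < a) (n : ℕ) :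
    log (n + a) - log a ≤ ∑ i ∈ range n, (i + a)⁻¹ := by
  have step : ∀ i : ℕ, log ((i + 1 : ℕ) + a) - log (i + a) ≤ (i + a)⁻¹ := by
    intro i
    have hi : 0 < (i : ℝ) + a := by positivity
    rw [← log_div (by positivity) hi.ne']
    refine (log_le_sub_one_of_pos (by positivity)).trans_eq ?_
    push_cast; field_simp; ring
  calc log (n + a) - log a = ∑ i ∈ range n, (log ((i + 1 : ℕ) + a) - log (i + a)) := by
        rw [sum_range_sub fun i : ℕ => log (i + a)]; simp
    _ ≤ _ := sum_le_sum fun i _ => step i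

lemma div_add_sq_le_inv_sqrt_mul_inv_sqrt {t a c : ℝ} (ht : 0 < t) (ha : 0 < a) (hc : 0 ≤ c)
    (h : t ^ 2 * c < a) : t / (a + t ^ 2) ≤ (√a)⁻¹ * (√(c + 1))⁻¹ := by
  rw [← mul_inv, ← sqrt_mul ha.le, ← inv_div]
  refine inv_anti₀ (by positivity) ?_
  rw [sqrt_le_left (by positivity), div_pow, le_div_iff₀ (by positivity)]
  nlinarith [mul_lt_mul_of_pos_left h ha, sq_nonneg t, mul_pos ha (sq_pos_of_pos ht)]

lemma min_one_sq_mul_one_add_max_sq {t : ℝ} (ht : 0 < t) :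
    min 1 (t ^ 2) * (1 + max t t⁻¹ ^ 2) = 1 + t ^ 2 := by
  rcases le_total 1 t with h | h
  · rw [min_eq_left (one_le_pow₀ h), max_eq_left ((inv_le_one_of_one_le₀ h).trans h)]
    ring
  · rw [min_eq_right (pow_le_one₀ ht.le h), max_eq_right (h.trans (one_le_inv₀ ht |>.2 h))]
    field_simp
    ring

lemma log_sub_log_le_log_floor_add {t : ℝ} (ht : 0 < t) {d : ℕ} (hd : 1 ≤ d) :
    log d - log (1 + max t t⁻¹ ^ 2) ≤
      log (⌊min 1 (t ^ 2) * d⌋₊ + (1 + t ^ 2)) - log (1 + t ^ 2) := by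
  set N := ⌊min 1 (t ^ 2) * d⌋₊
  have hN : min 1 (t ^ 2) * d ≤ N + 1 := (Nat.lt_floor_add_one _).le
  have key : d * (1 + t ^ 2) ≤ (N + (1 + t ^ 2)) * (1 + max t t⁻¹ ^ 2) := calc
    d * (1 + t ^ 2) = min 1 (t ^ 2) * d * (1 + max t t⁻¹ ^ 2) := by
      rw [← min_one_sq_mul_one_add_max_sq ht]; ring
    _ ≤ (N + 1) * (1 + max t t⁻¹ ^ 2) := by gcongr
    _ ≤ (N + (1 + t ^ 2)) * (1 + max t t⁻¹ ^ 2) := by gcongr; linarith [sq_nonneg t]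
  have hd' : (0 : ℝ) < d := by exact_mod_cast hd
  have := log_le_log (by positivity) key
  rw [log_mul hd'.ne' (by positivity), log_mul (by positivity) (by positivity)] at this
  linarith

noncomputable def overlapForm (t : ℝ) (d : ℕ) : ℝ :=
  ∑ i ∈ range d, ∑ j ∈ range d, overlapWeight t i j * (√((i : ℝ) + 1))⁻¹ * (√((j : ℝ) + 1))⁻¹

lemma overlapForm_nonneg (t : ℝ) (d : ℕ) : 0 ≤ overlapForm t d :=
  sum_nonneg fun i _ => sum_nonneg fun j _ => by have := overlapWeight_nonneg t i j; positivity

lemma overlapForm_le {t : ℝ} (ht : 0 < t) (d : ℕ) : overlapForm t d ≤ t * Zd d := by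
  refine (sum_sum_mul_mul_le_mul_sum_sq _ _ _ ht (overlapWeight_nonneg t)
    (fun i _ => sum_overlapWeight_row_le t i d)
    (fun j _ => sum_overlapWeight_col_le t j d)).trans_eq ?_
  simp only [Zd, inv_pow]
  exact congrArg _ (sum_congr rfl fun i _ => by rw [sq_sqrt (by positivity)])

lemma mul_log_sub_le_overlapForm {t : ℝ} (ht : 0 < t) {d : ℕ} (hd : 1 ≤ d) :
    t * (log d - log (1 + max t t⁻¹ ^ 2)) ≤ overlapForm t d := by
  set N := ⌊min 1 (t ^ 2) * d⌋₊
  have hNd : N ≤ d :=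
    Nat.floor_le_of_le (mul_le_of_le_one_left (Nat.cast_nonneg d) (min_le_left _ _))
  have hfull : ∀ i < N, ∑ j ∈ range d, overlapWeight t i j = 1 := fun i hi =>
    sum_overlapWeight_row_eq_one <| calc
      (i + 1 : ℝ) ≤ N := by exact_mod_cast hi
      _ ≤ min 1 (t ^ 2) * d := Nat.floor_le (by positivity)
      _ ≤ t ^ 2 * d := mul_le_mul_of_nonneg_right (min_le_right _ _) (Nat.cast_nonneg d)
  have hrow : ∀ i : ℕ, (∑ j ∈ range d, overlapWeight t i j) * (t / (i + 1 + t ^ 2)) ≤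
      ∑ j ∈ range d, overlapWeight t i j * (√((i : ℝ) + 1))⁻¹ * (√((j : ℝ) + 1))⁻¹ := by
    intro i
    rw [sum_mul]
    refine sum_le_sum fun j _ => ?_
    rcases (overlapWeight_nonneg t i j).eq_or_lt with h | h
    · simp [← h]
    · rw [mul_assoc]
      exact mul_le_mul_of_nonneg_left (div_add_sq_le_inv_sqrt_mul_inv_sqrt ht (by positivity)
        (by positivity) (lt_of_overlapWeight_pos h)) h.le
  calc t * (log d - log (1 + max t t⁻¹ ^ 2))
      ≤ t * (log (N + (1 + t ^ 2)) - log (1 + t ^ 2)) :=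
        mul_le_mul_of_nonneg_left (log_sub_log_le_log_floor_add ht hd) ht.le
    _ ≤ t * ∑ i ∈ range N, (i + (1 + t ^ 2))⁻¹ :=
        mul_le_mul_of_nonneg_left (log_add_sub_log_le_sum_inv (by positivity) N) ht.le
    _ = ∑ i ∈ range N, (∑ j ∈ range d, overlapWeight t i j) * (t / (i + 1 + t ^ 2)) := by
        rw [mul_sum]
        exact sum_congr rfl fun i hi => by rw [hfull i (mem_range.1 hi)]; ring
    _ ≤ ∑ i ∈ range d, (∑ j ∈ range d, overlapWeight t i j) * (t / (i + 1 + t ^ 2)) :=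
        sum_le_sum_of_subset_of_nonneg (range_subset_range.2 hNd) fun i _ _ =>
          mul_nonneg (sum_nonneg fun j _ => overlapWeight_nonneg t i j) (by positivity)
    _ ≤ overlapForm t d := sum_le_sum fun i _ => hrow i

lemma one_add_log_one_add_sq_le {M : ℝ} (hM : 1 ≤ M) : 1 + log (1 + M ^ 2) ≤ 4 * log (1 + M) := by
  have hsq : log (1 + M ^ 2) ≤ 2 * log (1 + M) := by
    calc log (1 + M ^ 2) ≤ log ((1 + M) ^ 2) := log_le_log (by positivity) (by nlinarith)
      _ = 2 * log (1 + M) := by rw [log_pow]; norm_num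
  have hone : 1 ≤ 2 * log (1 + M) := by
    have := log_le_log (by norm_num) (show (2 : ℝ) ≤ 1 + M by linarith)
    linarith [log_two_gt_d9]
  linarith

lemma Zd_nonneg (d : ℕ) : 0 ≤ Zd d :=
  sum_nonneg fun i _ => by positivity

lemma Zd_pos {d : ℕ} (hd : 1 ≤ d) : 0 < Zd d :=
  sum_pos (fun i _ => by positivity) (nonempty_range_iff.2 (by omega))

lemma Zd_le_one_add_log (d : ℕ) : Zd d ≤ 1 + log d := by
  simpa [Zd, harmonic] using harmonic_le_one_add_log d

lemma abs_inv_Zd_mul_overlapForm_sub_le {t : ℝ} (ht : 0 < t) {d : ℕ} (hd : 1 ≤ d) :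
    |(Zd d)⁻¹ * overlapForm t d - t| ≤ 4 * t * log (1 + max t t⁻¹) / (1 + log d) := by
  set A := log (1 + max t t⁻¹ ^ 2)
  have hZ := Zd_pos hd
  have hlogd : 0 ≤ log d := log_nonneg (by exact_mod_cast hd)
  have hup : (Zd d)⁻¹ * overlapForm t d ≤ t := by
    rw [inv_mul_le_iff₀ hZ, mul_comm]; exact overlapForm_le ht d
  have hlow : t * (log d - A) / (1 + log d) ≤ (Zd d)⁻¹ * overlapForm t d := by
    rcases le_total (log d) A with h | h
    · refine (div_nonpos_of_nonpos_of_nonneg ?_ (by positivity)).trans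
        (mul_nonneg (inv_nonneg.2 hZ.le) (overlapForm_nonneg t d))
      exact mul_nonpos_of_nonneg_of_nonpos ht.le (by linarith)
    · calc t * (log d - A) / (1 + log d) ≤ t * (log d - A) / Zd d :=
            div_le_div_of_nonneg_left (mul_nonneg ht.le (sub_nonneg.2 h)) hZ (Zd_le_one_add_log d)
        _ ≤ (Zd d)⁻¹ * overlapForm t d := by
            rw [div_eq_inv_mul]
            exact mul_le_mul_of_nonneg_left (mul_log_sub_le_overlapForm ht hd) (by positivity)
  have hM : 1 ≤ max t t⁻¹ := by
    rcases le_total 1 t with h | h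
    · exact h.trans (le_max_left _ _)
    · exact ((one_le_inv₀ ht).2 h).trans (le_max_right _ _)
  rw [abs_sub_comm, abs_of_nonneg (by linarith)]
  calc t - (Zd d)⁻¹ * overlapForm t d ≤ t - t * (log d - A) / (1 + log d) := by linarith
    _ = t * (1 + A) / (1 + log d) := by field_simp; ring
    _ ≤ 4 * t * log (1 + max t t⁻¹) / (1 + log d) := by
        rw [mul_comm 4 t, mul_assoc]
        gcongr
        exact one_add_log_one_add_sq_le hM

lemma ofReal_sqrt_mul_star {x : ℝ} (hx : 0 ≤ x) : (√x : ℂ) * star (√x : ℂ) = x := by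
  rw [Complex.star_def, Complex.conj_ofReal, ← Complex.ofReal_mul, mul_self_sqrt hx]

section WeightedMatrixUnits

variable {n : Type*} [DecidableEq n]

lemma posSemidef_smul_one_sub_diagonal {a : ℝ} {f : n → ℝ} (h : ∀ i, f i ≤ a) :
    ((a : ℂ) • (1 : Matrix n n ℂ) - diagonal fun i => (f i : ℂ)).PosSemidef := by
  rw [smul_one_eq_diagonal, diagonal_sub]
  exact PosSemidef.diagonal fun i => by
    simpa [← Complex.ofReal_sub, Complex.zero_le_real] using h i

lemma star_dotProduct_single_kronecker_single_mulVec [Fintype n] (φ : n × n → ℂ) (i j : n)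
    (c : ℂ) :
    star φ ⬝ᵥ ((single i j c ⊗ₖ single i j c) *ᵥ φ) = star (φ (i, i)) * c ^ 2 * φ (j, j) := by
  rw [single_kronecker_single, single_mulVec_eq, dotProduct_smul, dotProduct_single]
  simp only [Pi.star_apply, mul_one, smul_eq_mul]
  ring

noncomputable def weightedMatrixUnits (w : n → n → ℝ) (r : n × n) : Matrix n n ℂ :=
  single r.1 r.2 (√(w r.1 r.2) : ℂ)

variable [Fintype n] {w : n → n → ℝ}

lemma sum_weightedMatrixUnits_mul_conjTranspose (hw : ∀ i j, 0 ≤ w i j) :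
    ∑ r, weightedMatrixUnits w r * (weightedMatrixUnits w r)ᴴ =
      diagonal fun i => ((∑ j, w i j : ℝ) : ℂ) := by
  simp only [weightedMatrixUnits, conjTranspose_single, single_mul_single_same,
    ofReal_sqrt_mul_star (hw _ _), Fintype.sum_prod_type, Complex.ofReal_sum]
  rw [← sum_single_eq_diagonal]
  exact sum_congr rfl fun i _ => (map_sum (singleAddMonoidHom i i : ℂ →+ Matrix n n ℂ) _ _).symm

lemma sum_conjTranspose_mul_weightedMatrixUnits (hw : ∀ i j, 0 ≤ w i j) :
    ∑ r, (weightedMatrixUnits w r)ᴴ * weightedMatrixUnits w r =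
      diagonal fun j => ((∑ i, w i j : ℝ) : ℂ) := by
  simp only [weightedMatrixUnits, conjTranspose_single, single_mul_single_same, mul_comm (star _),
    ofReal_sqrt_mul_star (hw _ _), Fintype.sum_prod_type_right, Complex.ofReal_sum]
  rw [← sum_single_eq_diagonal]
  exact sum_congr rfl fun j _ => (map_sum (singleAddMonoidHom j j : ℂ →+ Matrix n n ℂ) _ _).symm

lemma sum_star_dotProduct_kronecker_weightedMatrixUnits (hw : ∀ i j, 0 ≤ w i j)
    (φ : n × n → ℂ) :
    ∑ r : n × n, star φ ⬝ᵥ ((weightedMatrixUnits w r ⊗ₖ weightedMatrixUnits w r) *ᵥ φ) =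
      ∑ r : n × n, star (φ (r.1, r.1)) * (w r.1 r.2 : ℂ) * φ (r.2, r.2) :=
  sum_congr rfl fun r _ => by
    rw [weightedMatrixUnits, star_dotProduct_single_kronecker_single_mulVec,
      ← Complex.ofReal_pow, sq_sqrt (hw _ _)]

end WeightedMatrixUnits

lemma sum_star_Phi_mul_mul_Phi (d : ℕ) (g : ℕ → ℕ → ℝ) :
    ∑ r : Fin d × Fin d, star (Phi d (r.1, r.1)) * (g r.1 r.2 : ℂ) * Phi d (r.2, r.2) =
      (((Zd d)⁻¹ * ∑ i ∈ range d, ∑ j ∈ range d,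
        g i j * (√((i : ℝ) + 1))⁻¹ * (√((j : ℝ) + 1))⁻¹ : ℝ) : ℂ) := by
  have hZ : (√(Zd d))⁻¹ * (√(Zd d))⁻¹ = (Zd d)⁻¹ := by
    rw [← mul_inv, mul_self_sqrt (Zd_nonneg d)]
  simp only [Phi, if_true, Complex.star_def, Complex.conj_ofReal, ← Complex.ofReal_mul,
    ← Complex.ofReal_sum, Fintype.sum_prod_type, mul_sum]
  congr 1
  rw [← Fin.sum_univ_eq_sum_range (fun i => ∑ j ∈ range d, (Zd d)⁻¹ *
    (g i j * (√((i : ℝ) + 1))⁻¹ * (√((j : ℝ) + 1))⁻¹))]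
  refine sum_congr rfl fun i _ => ?_
  rw [← Fin.sum_univ_eq_sum_range (fun j => (Zd d)⁻¹ *
    (g i j * (√((i : ℝ) + 1))⁻¹ * (√((j : ℝ) + 1))⁻¹))]
  refine sum_congr rfl fun j _ => ?_
  rw [zvec, zvec, ← hZ]
  ring

theorem exists_line_matrices :
    ∃ C : ℝ, 0 < C ∧ ∀ (d : ℕ) (t : ℝ), 1 ≤ d → 0 < t →
      ∃ L : Fin d × Fin d → Matrix (Fin d) (Fin d) ℂ,
        ((1 : Matrix (Fin d) (Fin d) ℂ) - ∑ r : Fin d × Fin d, L r * (L r)ᴴ).PosSemidef ∧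
        (((t : ℂ) ^ 2 • (1 : Matrix (Fin d) (Fin d) ℂ)) -
            ∑ r : Fin d × Fin d, (L r)ᴴ * L r).PosSemidef ∧
        ‖(∑ r : Fin d × Fin d,
            (star (Phi d) ⬝ᵥ ((L r ⊗ₖ L r).mulVec (Phi d)))) - (t : ℂ)‖ ≤
          C * t * Real.log (1 + max t t⁻¹) / (1 + Real.log d) := by
  refine ⟨4, by norm_num, fun d t hd ht => ?_⟩
  set w : Fin d → Fin d → ℝ := fun i j => overlapWeight t i j
  have hw : ∀ i j, 0 ≤ w i j := fun i j => overlapWeight_nonneg t i j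
  refine ⟨weightedMatrixUnits w, ?_, ?_, ?_⟩
  · rw [sum_weightedMatrixUnits_mul_conjTranspose hw]
    simpa using posSemidef_smul_one_sub_diagonal (a := 1) fun i : Fin d =>
      (Fin.sum_univ_eq_sum_range (overlapWeight t i ·) d).trans_le (sum_overlapWeight_row_le t i d)
  · rw [sum_conjTranspose_mul_weightedMatrixUnits hw]
    simpa using posSemidef_smul_one_sub_diagonal (a := t ^ 2) fun j : Fin d =>
      (Fin.sum_univ_eq_sum_range (overlapWeight t · j) d).trans_le (sum_overlapWeight_col_le t j d)
  · rw [sum_star_dotProduct_kronecker_weightedMatrixUnits hw, sum_star_Phi_mul_mul_Phi,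
      ← Complex.ofReal_sub, Complex.norm_real, norm_eq_abs]
    exact abs_inv_Zd_mul_overlapForm_sub_le ht hd
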